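/- arXiv:math/0411572 — 2 statements merged into one kernel-verified Lean document; each statement's English description precedes it below -/
import Mathlib

section
/- Let V₁, …, V_s be finite-dimensional vector spaces over a field, all isomorphic to a fixed space V₀, and let L be a linear endomorphism of V = V₁ ⊕ ⋯ ⊕ V_s that maps V_i isomorphically onto V_{i+1} for i < s and maps V_s into V₁ via a linear map ν : V₀ → V₀ (after identifying all V_i with V₀ via the maps L). Then coker(L - id : V → V) is isomorphic to coker(ν - id : V₀ → V₀). -/
/-- If `L` is an endomorphism of `V = V₁ ⊕ ⋯ ⊕ V_s` (all summands
identified with `V₀`) which shifts the summands cyclically, acting on the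
wrap-around via `ν : V₀ → V₀`, then `coker(L - id) ≅ coker(ν - id)`. -/
theorem stmt1 {K V₀ : Type*} [Field K] [AddCommGroup V₀] [Module K V₀]
    [FiniteDimensional K V₀] (s : ℕ) [NeZero s] (ν : V₀ →ₗ[K] V₀)
    (L : (Fin s → V₀) →ₗ[K] (Fin s → V₀))
    (hL : ∀ (v : Fin s → V₀) (i : Fin s),
      L v i = if i = 0 then ν (v (i - 1)) else v (i - 1)) :
    Nonempty
      (((Fin s → V₀) ⧸ LinearMap.range (L - LinearMap.id)) ≃ₗ[K]
        (V₀ ⧸ LinearMap.range (ν - LinearMap.id))) := by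
  classical
  have hs0 : 0 < s := Nat.pos_of_ne_zero (NeZero.ne s)
  have hc : ∀ i : Fin s, (i - 1).val = if i.val = 0 then s - 1 else i.val - 1 := by
    intro i
    have hi := i.isLt
    simp only [Fin.sub_def, Fin.val_one']
    rcases eq_or_ne s 1 with h1 | h1
    · subst h1
      have h0 : i.val = 0 := by omega
      simp [h0]
    · have h1m : 1 % s = 1 := Nat.mod_eq_of_lt (by omega)
      rw [h1m]
      by_cases h0 : i.val = 0
      · rw [h0, if_pos rfl]
        simp [Nat.mod_eq_of_lt (show s - 1 < s by omega)]
      · rw [if_neg h0]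
        have he : s - 1 + i.val = (i.val - 1) + s := by omega
        rw [he, Nat.add_mod_right, Nat.mod_eq_of_lt (by omega)]
  set N := LinearMap.range (ν - LinearMap.id) with hN
  set P := LinearMap.range (L - (LinearMap.id : (Fin s → V₀) →ₗ[K] _)) with hP
  let φ : (Fin s → V₀) →ₗ[K] V₀ := ∑ i : Fin s, LinearMap.proj i
  have hφ : ∀ v : Fin s → V₀, φ v = ∑ i, v i := by
    intro v
    simp [φ, LinearMap.sum_apply]
  let ψ : (Fin s → V₀) →ₗ[K] (V₀ ⧸ N) := N.mkQ.comp φ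
  have key : ∀ v : Fin s → V₀, φ (L v - v) = ν (v (0 - 1)) - v (0 - 1) := by
    intro v
    have hsum : ∀ i : Fin s, (L v) i - v i
        = (if i = 0 then ν (v (0 - 1)) - v (0 - 1) else 0) + (v (i - 1) - v i) := by
      intro i
      rw [hL]
      by_cases h : i = 0 <;> simp [h]
    rw [hφ]
    simp only [Pi.sub_apply]
    calc ∑ i : Fin s, ((L v) i - v i)
        = ∑ i : Fin s, ((if i = 0 then ν (v (0 - 1)) - v (0 - 1) else 0) + (v (i - 1) - v i)) :=
          Finset.sum_congr rfl (fun i _ => hsum i)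
      _ = (ν (v (0 - 1)) - v (0 - 1)) + (∑ i : Fin s, v (i - 1) - ∑ i : Fin s, v i) := by
          rw [Finset.sum_add_distrib, Finset.sum_ite_eq' Finset.univ 0, Finset.sum_sub_distrib]
          simp
      _ = ν (v (0 - 1)) - v (0 - 1) := by
          rw [Fintype.sum_equiv (Equiv.subRight (1 : Fin s)) (fun i => v (i - 1)) v
            (fun i => rfl)]
          abel
  have hker : P ≤ LinearMap.ker ψ := by
    rintro _ ⟨v, rfl⟩
    simp only [ψ, LinearMap.mem_ker, LinearMap.comp_apply, Submodule.mkQ_apply,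
      Submodule.Quotient.mk_eq_zero, LinearMap.sub_apply, LinearMap.id_apply, key v, hN]
    exact ⟨v (0 - 1), by simp⟩
  let f : ((Fin s → V₀) ⧸ P) →ₗ[K] (V₀ ⧸ N) := Submodule.liftQ P ψ hker
  have hsurj : Function.Surjective f := by
    intro x
    obtain ⟨y, rfl⟩ := N.mkQ_surjective x
    refine ⟨Submodule.Quotient.mk (Pi.single (0 : Fin s) y), ?_⟩
    simp [f, ψ, hφ]
  have hinj : Function.Injective f := by
    rw [← LinearMap.ker_eq_bot]
    apply Submodule.ker_liftQ_eq_bot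
    intro v hv
    simp only [ψ, LinearMap.mem_ker, LinearMap.comp_apply, Submodule.mkQ_apply,
      Submodule.Quotient.mk_eq_zero, hN] at hv
    obtain ⟨w, hw⟩ := hv
    rw [hφ] at hw
    have hw' : ν w - w = ∑ i, v i := by simpa using hw
    refine ⟨fun i => w + ∑ j ∈ Finset.Ioi i, v j, ?_⟩
    funext i
    simp only [LinearMap.sub_apply, LinearMap.id_apply, Pi.sub_apply, hL]
    by_cases h : i = 0
    · subst h
      have h01 : ((0 : Fin s) - 1).val = s - 1 := by rw [hc]; simp
      have hIoi : Finset.Ioi ((0 : Fin s) - 1) = ∅ := by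
        ext j
        simp only [Finset.mem_Ioi, Finset.notMem_empty, iff_false, Fin.lt_def, h01]
        have := j.isLt
        omega
      have huniv : (Finset.univ : Finset (Fin s)) = insert 0 (Finset.Ioi (0 : Fin s)) := by
        ext j
        simp [Finset.mem_Ioi, Fin.pos_iff_ne_zero, or_comm, em]
      rw [huniv, Finset.sum_insert (by simp)] at hw'
      simp only [if_pos rfl, if_true, hIoi, Finset.sum_empty, add_zero]
      rw [sub_add_eq_sub_sub, hw', add_sub_cancel_right]
    · have hv0 : i.val ≠ 0 := fun hh => h (Fin.ext hh)
      have hIoi : Finset.Ioi (i - 1) = insert i (Finset.Ioi i) := by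
        ext j
        simp only [Finset.mem_Ioi, Finset.mem_insert, Fin.lt_def, hc, if_neg hv0, Fin.ext_iff]
        have := i.isLt
        omega
      rw [if_neg h, hIoi, Finset.sum_insert (by simp)]
      abel
  exact ⟨LinearEquiv.ofBijective f ⟨hinj, hsurj⟩⟩
end

section
/- Under the hypotheses of the previous statement (L a cyclic-shift endomorphism of V = V₁ ⊕ ⋯ ⊕ V_s with come-back map ν on V₀), the kernel of (L - id) on V is isomorphic to the kernel of (ν - id) on V₀. -/
/-- With `L` the cyclic-shift endomorphism of `V = V₁ ⊕ ⋯ ⊕ V_s`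
with come-back map `ν` on `V₀`, the kernel of `L - id` on `V` is isomorphic to
the kernel of `ν - id` on `V₀`. -/
theorem stmt2 {K V₀ : Type*} [Field K] [AddCommGroup V₀] [Module K V₀]
    [FiniteDimensional K V₀] (s : ℕ) [NeZero s] (ν : V₀ →ₗ[K] V₀)
    (L : (Fin s → V₀) →ₗ[K] (Fin s → V₀))
    (hL : ∀ (v : Fin s → V₀) (i : Fin s),
      L v i = if i = 0 then ν (v (i - 1)) else v (i - 1)) :
    Nonempty
      ((LinearMap.ker (L - LinearMap.id)) ≃ₗ[K]
        (LinearMap.ker (ν - LinearMap.id))) := by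
  have hs : 0 < s := Nat.pos_of_ne_zero (NeZero.ne s)
  -- elements of the kernel are constant
  have key : ∀ (v : Fin s → V₀), L v = v → ∀ i : Fin s, v i = v 0 := by
    intro v hv i
    obtain ⟨n, hn⟩ := i
    induction n with
    | zero => congr 1
    | succ n ih =>
      have h1 : (⟨n + 1, hn⟩ : Fin s) ≠ 0 := by
        simp [Fin.ext_iff]
      have h3 : (⟨n + 1, hn⟩ : Fin s) - 1 = ⟨n, Nat.lt_of_succ_lt hn⟩ := by
        apply Fin.ext
        rw [Fin.sub_def]
        have hs2 : 2 ≤ s := by omega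
        have h1v : (1 : Fin s).val = 1 := by
          simp [Fin.val_one', Nat.mod_eq_of_lt (by omega : 1 < s)]
        simp only [h1v]
        have : s - 1 + (n + 1) = n + s := by omega
        rw [this, Nat.add_mod_right, Nat.mod_eq_of_lt (by omega)]
      have h2 : v ⟨n + 1, hn⟩ = v (⟨n + 1, hn⟩ - 1) := by
        conv_lhs => rw [← hv]
        rw [hL v, if_neg h1]
      rw [h2, h3, ih]
  have hmemL : ∀ v : Fin s → V₀, v ∈ LinearMap.ker (L - LinearMap.id) ↔ L v = v := by
    intro v
    rw [LinearMap.mem_ker, LinearMap.sub_apply, LinearMap.id_apply, sub_eq_zero]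
  have hmemν : ∀ x : V₀, x ∈ LinearMap.ker (ν - LinearMap.id) ↔ ν x = x := by
    intro x
    rw [LinearMap.mem_ker, LinearMap.sub_apply, LinearMap.id_apply, sub_eq_zero]
  -- v 0 is fixed by ν
  have hfix : ∀ (v : Fin s → V₀), L v = v → ν (v 0) = v 0 := by
    intro v hv
    have h0 : v 0 = ν (v (0 - 1)) := by
      conv_lhs => rw [← hv]
      rw [hL v, if_pos rfl]
    rw [key v hv (0 - 1)] at h0
    exact h0.symm
  refine ⟨{
    toFun := fun v => ⟨v.1 0, (hmemν _).2 (hfix v.1 ((hmemL v.1).1 v.2))⟩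
    map_add' := fun v w => by simp
    map_smul' := fun c v => by simp
    invFun := fun x => ⟨fun _ => x.1, by
      refine (hmemL _).2 (funext fun i => ?_)
      rw [hL]
      split <;> simp [(hmemν x.1).1 x.2]⟩
    left_inv := fun v => by
      ext i
      exact (key v.1 ((hmemL v.1).1 v.2) i).symm
    right_inv := fun x => rfl }⟩
end
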